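/- arXiv:2602.18387 — 4 statements merged into one kernel-verified Lean document; each statement's English description precedes it below -/
import Mathlib

section
/- Let 0 < s < 1, k > 0 and m = ⌊1/(2s)⌋, and define F_m(r) = k^(2sm)/(r^(2sm)(r^(2s) − k^(2s))) − s^{-1} k^(2−2s)/(r^2 − k^2). If 1/(2s) ∉ ℕ, then r^(1/2) F_m(r) is square integrable on (0,∞), i.e., ∫₀^∞ r |F_m(r)|² dr < ∞. -/
open MeasureTheory Set

lemma abs_sub_right_of_mem_uIcc {x r k : ℝ} (h : x ∈ uIcc r k) : |x - k| ≤ |r - k| := by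
  rcases le_total r k with hle | hle
  · rw [uIcc_of_le hle] at h
    rw [abs_of_nonpos (by linarith [h.2]), abs_of_nonpos (by linarith)]
    linarith [h.1]
  · rw [uIcc_of_ge hle] at h
    rw [abs_of_nonneg (by linarith [h.1]), abs_of_nonneg (by linarith)]
    linarith [h.2]

lemma rpow_base_bound {a b x e : ℝ} (ha : 0 < a) (hax : a ≤ x) (hxb : x ≤ b) :
    x ^ e ≤ a ^ e + b ^ e := by
  rcases le_or_gt 0 e with he | he
  · exact le_add_of_nonneg_of_le (Real.rpow_nonneg ha.le e)
      (Real.rpow_le_rpow (ha.trans_le hax).le hxb he)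
  · exact le_add_of_le_of_nonneg (Real.rpow_le_rpow_of_nonpos ha hax he.le)
      (Real.rpow_nonneg (by linarith : (0:ℝ) ≤ b) e)

lemma hasDeriv_NN (k μ α c r : ℝ) (hr : 0 < r) :
    HasDerivAt (fun x : ℝ => k^μ*(x^2-k^2) - c*(x^μ*(x^α-k^α)))
      (k^μ*(2*r) - c*(μ*r^(μ-1)*(r^α-k^α) + α*r^(μ+α-1))) r := by
  have h1 : HasDerivAt (fun x:ℝ => x^μ) (μ * r^(μ-1)) r :=
    Real.hasDerivAt_rpow_const (Or.inl hr.ne')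
  have h2 : HasDerivAt (fun x:ℝ => x^α - k^α) (α * r^(α-1)) r :=
    (Real.hasDerivAt_rpow_const (Or.inl hr.ne')).sub_const _
  have h4 : HasDerivAt (fun x:ℝ => x^2 - k^2) (2*r) r := by
    simpa using ((hasDerivAt_pow 2 r).sub_const (k^2))
  have h5 := ((h4.const_mul (k^μ)).sub ((h1.mul h2).const_mul c))
  refine h5.congr_deriv (Eq.symm ?_)
  have hh : r^μ * (α * r^(α-1)) = α * r^(μ+α-1) := by
    rw [show μ+α-1 = μ+(α-1) by ring, Real.rpow_add hr]; ring
  linear_combination c * hh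

lemma hasDeriv_NN1 (k μ α c r : ℝ) (hr : 0 < r) :
    HasDerivAt (fun x : ℝ => k^μ*(2*x) - c*(μ*x^(μ-1)*(x^α-k^α) + α*x^(μ+α-1)))
      (k^μ*2 - c*(μ*((μ-1)*r^(μ-2)*(r^α-k^α)) + μ*α*r^(μ+α-2) + α*(μ+α-1)*r^(μ+α-2))) r := by
  have h1 : HasDerivAt (fun x:ℝ => x^(μ-1)) ((μ-1) * r^(μ-2)) r := by
    rw [show μ-2 = μ-1-1 by ring]
    exact Real.hasDerivAt_rpow_const (Or.inl hr.ne')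
  have h2 : HasDerivAt (fun x:ℝ => x^α - k^α) (α * r^(α-1)) r :=
    (Real.hasDerivAt_rpow_const (Or.inl hr.ne')).sub_const _
  have h3 : HasDerivAt (fun x:ℝ => x^(μ+α-1)) ((μ+α-1) * r^(μ+α-2)) r := by
    rw [show μ+α-2 = μ+α-1-1 by ring]
    exact Real.hasDerivAt_rpow_const (Or.inl hr.ne')
  have h0 : HasDerivAt (fun x:ℝ => k^μ*(2*x)) (k^μ*2) r := by
    simpa using ((hasDerivAt_id r).const_mul (2:ℝ)).const_mul (k^μ)
  have h5 := h0.sub ((((h1.const_mul μ).mul h2).add (h3.const_mul α)).const_mul c)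
  refine h5.congr_deriv (Eq.symm ?_)
  have hh : r^(μ-1) * (α * r^(α-1)) = α * r^(μ+α-2) := by
    rw [show μ+α-2 = (μ-1)+(α-1) by ring, Real.rpow_add hr]; ring
  linear_combination (c*μ) * hh

lemma auxMid (s k μ α : ℝ) (hs0 : 0 < s) (hk : 0 < k) (hα0 : 0 < α) (hμ0 : 0 ≤ μ)
    (hαs : α = 2*s) :
    ∃ M : ℝ, 0 ≤ M ∧ ∀ r ∈ Icc (k/2) (2*k), r ≠ k →
      |k^μ/(r^μ*(r^α-k^α)) - (1/s)*k^(2-α)/(r^2-k^2)| ≤ M := by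
  set c : ℝ := (1/s)*k^(2-α) with hc
  set S : Set ℝ := Icc (k/2) (2*k) with hSdef
  have hS : ∀ x ∈ S, 0 < x := fun x hx => lt_of_lt_of_le (by linarith) hx.1
  have hkS : k ∈ S := ⟨by linarith, by linarith⟩
  -- continuity of second derivative on S
  have crp : ∀ e : ℝ, ContinuousOn (fun x : ℝ => x ^ e) S :=
    fun e => continuousOn_id.rpow_const (fun x hx => Or.inl (hS x hx).ne')
  have N2cont : ContinuousOn (fun x : ℝ =>
      k^μ*2 - c*(μ*((μ-1)*x^(μ-2)*(x^α-k^α)) + μ*α*x^(μ+α-2) + α*(μ+α-1)*x^(μ+α-2))) S := by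
    apply continuousOn_const.sub
    apply continuousOn_const.mul
    exact ((continuousOn_const.mul (((continuousOn_const.mul (crp (μ-2))).mul
      ((crp α).sub continuousOn_const)))).add
      (continuousOn_const.mul (crp (μ+α-2)))).add (continuousOn_const.mul (crp (μ+α-2)))
  obtain ⟨C, hC⟩ := isCompact_Icc.exists_bound_of_continuousOn N2cont
  have hC0 : 0 ≤ C := le_trans (norm_nonneg _) (hC k hkS)
  -- N₁ k = 0
  have e1 : k ^ (2-α) * k ^ (μ+α-1) = k ^ μ * k := by
    rw [← Real.rpow_add hk, show (2-α)+(μ+α-1) = μ+1 by ring, Real.rpow_add_one hk.ne']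
  have e2 : c*(α*k^(μ+α-1)) = 2*(k^μ*k) := by
    rw [hc]
    calc (1/s)*k^(2-α)*(α*k^(μ+α-1)) = (α/s)*(k^(2-α)*k^(μ+α-1)) := by ring
      _ = (α/s)*(k^μ*k) := by rw [e1]
      _ = 2*(k^μ*k) := by rw [hαs]; field_simp
  have hN1k : k^μ*(2*k) - c*(μ*k^(μ-1)*(k^α-k^α) + α*k^(μ+α-1)) = 0 := by
    simp only [sub_self, mul_zero, zero_add]
    rw [e2]
    ring
  -- |N₁ x| ≤ C |x - k|
  have b1 : ∀ x ∈ S, |k^μ*(2*x) - c*(μ*x^(μ-1)*(x^α-k^α) + α*x^(μ+α-1))| ≤ C * |x - k| := by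
    intro x hx
    have := (convex_Icc (k/2) (2*k)).norm_image_sub_le_of_norm_hasDerivWithin_le
      (f' := fun r => k^μ*2 - c*(μ*((μ-1)*r^(μ-2)*(r^α-k^α)) + μ*α*r^(μ+α-2) + α*(μ+α-1)*r^(μ+α-2)))
      (fun y hy => (hasDeriv_NN1 k μ α c y (hS y hy)).hasDerivWithinAt) hC hkS hx
    rw [Real.norm_eq_abs, Real.norm_eq_abs, hN1k, sub_zero] at this
    exact this
  -- |N r| ≤ C |r - k| * |r - k|
  have b2 : ∀ r ∈ S, |k^μ*(r^2-k^2) - c*(r^μ*(r^α-k^α))| ≤ C * |r - k| * |r - k| := by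
    intro r hr
    have hTS : uIcc r k ⊆ S := (Set.ordConnected_Icc).uIcc_subset hr hkS
    have bnd : ∀ x ∈ uIcc r k,
        ‖k^μ*(2*x) - c*(μ*x^(μ-1)*(x^α-k^α) + α*x^(μ+α-1))‖ ≤ C * |r - k| := by
      intro x hx
      rw [Real.norm_eq_abs]
      exact (b1 x (hTS hx)).trans
        (mul_le_mul_of_nonneg_left (abs_sub_right_of_mem_uIcc hx) hC0)
    have := (convex_uIcc r k).norm_image_sub_le_of_norm_hasDerivWithin_le
      (fun y hy => (hasDeriv_NN k μ α c y (hS y (hTS hy))).hasDerivWithinAt) bnd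
      (right_mem_uIcc) (left_mem_uIcc)
    simp only [Real.norm_eq_abs, sub_self, mul_zero, sub_zero] at this
    simpa using this
  -- lower bound for |r^α - k^α|
  set L : ℝ := α⁻¹*(((k/2)^α)^(α⁻¹-1) + ((2*k)^α)^(α⁻¹-1)) with hLdef
  have hL : 0 < L := by
    apply mul_pos (by positivity)
    have := Real.rpow_pos_of_pos (show (0:ℝ) < (k/2)^α by positivity) (α⁻¹-1)
    have := Real.rpow_pos_of_pos (show (0:ℝ) < (2*k)^α by positivity) (α⁻¹-1)
    linarith
  have habs : ∀ r ∈ S, |r - k| ≤ L * |r^α - k^α| := by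
    intro r hr
    have hr0 := hS r hr
    have hT0 : (0:ℝ) < (k/2)^α := by positivity
    have m1 : r^α ∈ Icc ((k/2)^α) ((2*k)^α) :=
      ⟨Real.rpow_le_rpow (by positivity) hr.1 hα0.le, Real.rpow_le_rpow hr0.le hr.2 hα0.le⟩
    have m2 : k^α ∈ Icc ((k/2)^α) ((2*k)^α) :=
      ⟨Real.rpow_le_rpow (by positivity) (by linarith) hα0.le,
       Real.rpow_le_rpow hk.le (by linarith) hα0.le⟩
    have hder : ∀ x ∈ Icc ((k/2)^α) ((2*k)^α), HasDerivWithinAt (fun y:ℝ => y^α⁻¹)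
        (α⁻¹ * x^(α⁻¹-1)) (Icc ((k/2)^α) ((2*k)^α)) x := fun x hx =>
      (Real.hasDerivAt_rpow_const (Or.inl (hT0.trans_le hx.1).ne')).hasDerivWithinAt
    have hb : ∀ x ∈ Icc ((k/2)^α) ((2*k)^α), ‖α⁻¹ * x^(α⁻¹-1)‖ ≤ L := by
      intro x hx
      rw [Real.norm_eq_abs, abs_of_nonneg (mul_nonneg (inv_nonneg.mpr hα0.le)
        (Real.rpow_nonneg (le_trans hT0.le hx.1) _))]
      exact mul_le_mul_of_nonneg_left (rpow_base_bound hT0 hx.1 hx.2) (by positivity)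
    have key := (convex_Icc ((k/2)^α) ((2*k)^α)).norm_image_sub_le_of_norm_hasDerivWithin_le
      hder hb m2 m1
    rw [Real.rpow_rpow_inv hr0.le hα0.ne', Real.rpow_rpow_inv hk.le hα0.ne',
      Real.norm_eq_abs, Real.norm_eq_abs] at key
    exact key
  -- final bound
  refine ⟨C * L / ((k/2)^μ * (3*k/2)), div_nonneg (mul_nonneg hC0 hL.le) (by positivity), ?_⟩
  intro r hr hrk
  have hr0 := hS r hr
  have hrk' : r - k ≠ 0 := sub_ne_zero.mpr hrk
  have hrkpos : 0 < |r - k| := abs_pos.mpr hrk'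
  have hrde : r^α - k^α ≠ 0 := by
    rcases lt_or_gt_of_ne hrk with h | h
    · exact (sub_neg.mpr (Real.rpow_lt_rpow hr0.le h hα0)).ne
    · exact (sub_pos.mpr (Real.rpow_lt_rpow hk.le h hα0)).ne'
  have hr2 : r^2 - k^2 = (r-k)*(r+k) := by ring
  have hr2ne : r^2 - k^2 ≠ 0 := by
    rw [hr2]; exact mul_ne_zero hrk' (by positivity)
  have hrμ : (0:ℝ) < r^μ := Real.rpow_pos_of_pos hr0 μ
  have ident : k^μ/(r^μ*(r^α-k^α)) - (1/s)*k^(2-α)/(r^2-k^2)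
      = (k^μ*(r^2-k^2) - c*(r^μ*(r^α-k^α))) / (r^μ*((r^α-k^α)*(r^2-k^2))) := by
    rw [hc]
    field_simp
  rw [ident, abs_div]
  have hDabs : |r^μ*((r^α-k^α)*(r^2-k^2))| = r^μ * (|r ^ α - k ^ α| * (|r - k| * (r+k))) := by
    rw [abs_mul, abs_mul, abs_of_pos hrμ, hr2, abs_mul, abs_of_pos (by positivity : (0:ℝ) < r+k)]
  rw [hDabs]
  have hden_lb : (k/2)^μ * ((|r - k| / L) * (|r - k| * (3*k/2))) ≤ r^μ * (|r ^ α - k ^ α| * (|r - k| * (r+k))) := by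
    have l1 : (k/2)^μ ≤ r^μ := Real.rpow_le_rpow (by positivity) hr.1 hμ0
    have l2 : |r - k|/L ≤ |r ^ α - k ^ α| := (div_le_iff₀ hL).mpr (by linarith [habs r hr])
    have l3 : |r - k| * (3*k/2) ≤ |r - k| * (r+k) :=
      mul_le_mul_of_nonneg_left (by linarith [hr.1]) (abs_nonneg _)
    have h2 : (0:ℝ) ≤ |r - k|/L := by positivity
    calc (k/2)^μ * ((|r - k| / L) * (|r - k| * (3*k/2)))
        ≤ (k/2)^μ * ((|r - k| / L) * (|r - k| * (r+k))) := by
          apply mul_le_mul_of_nonneg_left (mul_le_mul_of_nonneg_left l3 h2) (by positivity)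
      _ ≤ r^μ * ((|r - k| / L) * (|r - k| * (r+k))) := by
          apply mul_le_mul_of_nonneg_right l1 (by positivity)
      _ ≤ r^μ * (|r ^ α - k ^ α| * (|r - k| * (r+k))) := by
          apply mul_le_mul_of_nonneg_left (mul_le_mul_of_nonneg_right l2 (by positivity)) hrμ.le
  have hden_pos : (0:ℝ) < (k/2)^μ * ((|r - k| / L) * (|r - k| * (3*k/2))) := by positivity
  calc |k^μ*(r^2-k^2) - c*(r^μ*(r^α-k^α))| / (r^μ * (|r ^ α - k ^ α| * (|r - k| * (r+k))))
      ≤ (C * |r - k| * |r - k|) / ((k/2)^μ * ((|r - k| / L) * (|r - k| * (3*k/2)))) :=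
        div_le_div₀ (by positivity) (b2 r hr) hden_pos hden_lb
    _ = C * L / ((k/2)^μ * (3*k/2)) := by
        field_simp

section aux4

lemma mul_rpow_sq {r : ℝ} (hr : 0 < r) (e : ℝ) : r * (r ^ e)^2 = r ^ (1+2*e) := by
  rw [sq, ← Real.rpow_add hr]
  nth_rewrite 1 [← Real.rpow_one r]
  rw [← Real.rpow_add hr]
  ring_nf

lemma auxCont (s k μ α : ℝ) {t : Set ℝ}
    (h : ∀ x ∈ t, 0 < x ∧ x^α - k^α ≠ 0 ∧ x^2 - k^2 ≠ 0) :
    ContinuousOn (fun r : ℝ =>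
      r * (k^μ/(r^μ*(r^α-k^α)) - (1/s)*k^(2-α)/(r^2-k^2))^2) t := by
  have crp : ∀ e : ℝ, ContinuousOn (fun x : ℝ => x ^ e) t :=
    fun e => continuousOn_id.rpow_const (fun x hx => Or.inl (h x hx).1.ne')
  apply continuousOn_id.mul
  apply ContinuousOn.pow
  apply ContinuousOn.sub
  · exact continuousOn_const.div ((crp μ).mul ((crp α).sub continuousOn_const))
      (fun x hx => mul_ne_zero (Real.rpow_pos_of_pos (h x hx).1 μ).ne' (h x hx).2.1)
  · exact continuousOn_const.div ((continuousOn_pow 2).sub continuousOn_const)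
      (fun x hx => (h x hx).2.2)

set_option maxHeartbeats 1000000 in
lemma auxMain (s k μ α : ℝ) (hs0 : 0 < s) (hk : 0 < k) (hα0 : 0 < α) (hμ0 : 0 ≤ μ)
    (hμ1 : μ < 1) (hsum1 : 1 < μ + α) (hαs : α = 2*s) :
    IntegrableOn (fun r : ℝ =>
      r * (k^μ/(r^μ*(r^α-k^α)) - (1/s)*k^(2-α)/(r^2-k^2))^2) (Ioi 0) := by
  have hc0 : (0:ℝ) < (1/s)*k^(2-α) := by positivity
  -- piece 1 : Ioc 0 (k/2)
  have h1 : IntegrableOn (fun r : ℝ =>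
      r * (k^μ/(r^μ*(r^α-k^α)) - (1/s)*k^(2-α)/(r^2-k^2))^2) (Ioc 0 (k/2)) := by
    have hklt : (k/2)^α < k^α := Real.rpow_lt_rpow (by positivity) (by linarith) hα0
    have hC1 : (0:ℝ) < k^μ/(k^α - (k/2)^α) :=
      div_pos (Real.rpow_pos_of_pos hk μ) (by linarith)
    have hden2 : (0:ℝ) < k^2 - (k/2)^2 := by nlinarith
    have hC2 : (0:ℝ) < (1/s)*k^(2-α)/(k^2-(k/2)^2) := div_pos hc0 hden2
    apply Integrable.mono'
      (g := fun r : ℝ => 2*(k^μ/(k^α - (k/2)^α))^2 * r^(1+2*(-μ))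
        + 2*((1/s)*k^(2-α)/(k^2-(k/2)^2))^2 * r)
    · apply Integrable.add
      · refine MeasureTheory.IntegrableOn.congr_set_ae ?_ Ioo_ae_eq_Ioc.symm
        exact ((intervalIntegral.integrableOn_Ioo_rpow_iff (by positivity : (0:ℝ) < k/2)).mpr
          (by linarith)).const_mul _
      · exact (continuous_const.mul continuous_id).integrableOn_Ioc
    · refine (auxCont s k μ α (fun x hx => ⟨hx.1, ?_, ?_⟩)).aestronglyMeasurable
        measurableSet_Ioc
      · exact (sub_neg.mpr (Real.rpow_lt_rpow hx.1.le (by linarith [hx.2]) hα0)).ne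
      · have : x^2 < k^2 := by nlinarith [hx.1, hx.2]
        exact (sub_neg.mpr this).ne
    · rw [ae_restrict_iff' measurableSet_Ioc]
      filter_upwards with r hr
      obtain ⟨hr0, hrk⟩ := hr
      have hrα : r^α < k^α := Real.rpow_lt_rpow hr0.le (by linarith) hα0
      have hrα2 : r^α ≤ (k/2)^α := Real.rpow_le_rpow hr0.le hrk hα0.le
      have hrμ : (0:ℝ) < r^μ := Real.rpow_pos_of_pos hr0 μ
      have hAbs : |k^μ/(r^μ*(r^α-k^α))| ≤ (k^μ/(k^α - (k/2)^α)) * r^(-μ) := by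
        rw [abs_div, abs_of_pos (Real.rpow_pos_of_pos hk μ), abs_mul, abs_of_pos hrμ,
          abs_of_neg (sub_neg.mpr hrα), neg_sub]
        calc k^μ/(r^μ*(k^α-r^α)) ≤ k^μ/(r^μ*(k^α-(k/2)^α)) := by
              refine div_le_div_of_nonneg_left (by positivity)
                (mul_pos hrμ (by linarith)) ?_
              exact mul_le_mul_of_nonneg_left (by linarith) hrμ.le
          _ = (k^μ/(k^α - (k/2)^α)) * r^(-μ) := by
              rw [Real.rpow_neg hr0.le, div_mul_eq_div_div_swap, div_eq_mul_inv]
      have hBbs : |(1/s)*k^(2-α)/(r^2-k^2)| ≤ (1/s)*k^(2-α)/(k^2-(k/2)^2) := by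
        have h2 : r^2 < k^2 := by nlinarith
        rw [abs_div, abs_of_pos hc0, abs_of_neg (sub_neg.mpr h2), neg_sub]
        refine div_le_div_of_nonneg_left hc0.le hden2 (by nlinarith)
      rw [Real.norm_eq_abs, abs_of_nonneg (by positivity)]
      have hrpm : (0:ℝ) ≤ (k^μ/(k^α - (k/2)^α)) * r^(-μ) := by positivity
      have hsq : (k^μ/(r^μ*(r^α-k^α)) - (1/s)*k^(2-α)/(r^2-k^2))^2
          ≤ 2*((k^μ/(k^α - (k/2)^α)) * r^(-μ))^2 + 2*((1/s)*k^(2-α)/(k^2-(k/2)^2))^2 := by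
        nlinarith [sq_abs (k^μ/(r^μ*(r^α-k^α))), sq_abs ((1/s)*k^(2-α)/(r^2-k^2)),
          sq_nonneg (k^μ/(r^μ*(r^α-k^α)) + (1/s)*k^(2-α)/(r^2-k^2)),
          mul_self_le_mul_self (abs_nonneg (k^μ/(r^μ*(r^α-k^α)))) hAbs,
          mul_self_le_mul_self (abs_nonneg ((1/s)*k^(2-α)/(r^2-k^2))) hBbs]
      calc r * (k^μ/(r^μ*(r^α-k^α)) - (1/s)*k^(2-α)/(r^2-k^2))^2
          ≤ r * (2*((k^μ/(k^α - (k/2)^α)) * r^(-μ))^2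
              + 2*((1/s)*k^(2-α)/(k^2-(k/2)^2))^2) :=
            mul_le_mul_of_nonneg_left hsq hr0.le
        _ = 2*(k^μ/(k^α - (k/2)^α))^2 * (r * (r^(-μ))^2)
              + 2*((1/s)*k^(2-α)/(k^2-(k/2)^2))^2 * r := by ring
        _ = 2*(k^μ/(k^α - (k/2)^α))^2 * r^(1+2*(-μ))
              + 2*((1/s)*k^(2-α)/(k^2-(k/2)^2))^2 * r := by rw [mul_rpow_sq hr0]
  -- piece 3 : Ioi (2*k)
  have h3 : IntegrableOn (fun r : ℝ =>
      r * (k^μ/(r^μ*(r^α-k^α)) - (1/s)*k^(2-α)/(r^2-k^2))^2) (Ioi (2*k)) := by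
    have hd1 : (0:ℝ) < 1 - (1/2:ℝ)^α :=
      sub_pos.mpr (Real.rpow_lt_one (by norm_num) (by norm_num) hα0)
    apply Integrable.mono'
      (g := fun r : ℝ => 2*(k^μ/(1-(1/2:ℝ)^α))^2 * r^(1+2*(-(μ+α)))
        + 2*((4/3)*((1/s)*k^(2-α)))^2 * r^(1+2*(-2:ℝ)))
    · apply Integrable.add
      · exact (integrableOn_Ioi_rpow_of_lt (by linarith) (by positivity)).const_mul _
      · exact (integrableOn_Ioi_rpow_of_lt (by norm_num) (by positivity)).const_mul _
    · refine (auxCont s k μ α (fun x hx => ?_)).aestronglyMeasurable measurableSet_Ioi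
      have hx0 : (0:ℝ) < x := lt_trans (by positivity) hx
      refine ⟨hx0, ?_, ?_⟩
      · exact (sub_pos.mpr (Real.rpow_lt_rpow hk.le (by simp at hx; linarith) hα0)).ne'
      · have : k^2 < x^2 := by simp at hx; nlinarith
        exact (sub_pos.mpr this).ne'
    · rw [ae_restrict_iff' measurableSet_Ioi]
      filter_upwards with r hr
      simp only [mem_Ioi] at hr
      have hr0 : (0:ℝ) < r := lt_trans (by positivity) hr
      have hrμ : (0:ℝ) < r^μ := Real.rpow_pos_of_pos hr0 μ
      have hrα : (0:ℝ) < r^α := Real.rpow_pos_of_pos hr0 α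
      have hαup : k^α ≤ r^α * (1/2:ℝ)^α := by
        have e : (r*(1/2))^α = r^α*(1/2:ℝ)^α := Real.mul_rpow hr0.le (by norm_num)
        calc k^α ≤ (r*(1/2))^α := Real.rpow_le_rpow hk.le (by linarith) hα0.le
          _ = r^α*(1/2:ℝ)^α := e
      have hαlow : r^α*(1-(1/2:ℝ)^α) ≤ r^α - k^α := by
        have e : r^α*(1-(1/2:ℝ)^α) = r^α - r^α*(1/2:ℝ)^α := by ring
        linarith
      have hden : (0:ℝ) < r^α - k^α := lt_of_lt_of_le (mul_pos hrα hd1) hαlow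
      have h2lt : k^2 < r^2 := by nlinarith
      have hAbs : |k^μ/(r^μ*(r^α-k^α))| ≤ (k^μ/(1-(1/2:ℝ)^α)) * r^(-(μ+α)) := by
        rw [abs_of_pos (div_pos (Real.rpow_pos_of_pos hk μ) (mul_pos hrμ hden))]
        have hmulα : r^μ*r^α = r^(μ+α) := (Real.rpow_add hr0 μ α).symm
        calc k^μ/(r^μ*(r^α-k^α)) ≤ k^μ/(r^μ*(r^α*(1-(1/2:ℝ)^α))) := by
              refine div_le_div_of_nonneg_left (by positivity)
                (mul_pos hrμ (mul_pos hrα hd1)) ?_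
              exact mul_le_mul_of_nonneg_left hαlow hrμ.le
          _ = k^μ/(r^(μ+α)*(1-(1/2:ℝ)^α)) := by rw [← mul_assoc, hmulα]
          _ = (k^μ/(1-(1/2:ℝ)^α)) * r^(-(μ+α)) := by
              rw [Real.rpow_neg hr0.le, div_mul_eq_div_div_swap, div_eq_mul_inv]
      have hBbs : |(1/s)*k^(2-α)/(r^2-k^2)| ≤ ((4/3)*((1/s)*k^(2-α))) * r^(-2:ℝ) := by
        rw [abs_of_pos (div_pos hc0 (by linarith))]
        have h2e : r^((-2):ℝ) = (r^2)⁻¹ := by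
          rw [show ((-2):ℝ) = -((2:ℕ):ℝ) by norm_num, Real.rpow_neg hr0.le,
            Real.rpow_natCast]
        rw [h2e]
        calc (1/s)*k^(2-α)/(r^2-k^2) ≤ (1/s)*k^(2-α)/((3/4)*r^2) := by
              refine div_le_div_of_nonneg_left hc0.le (by positivity) ?_
              nlinarith
          _ = ((4/3)*((1/s)*k^(2-α))) * (r^2)⁻¹ := by
              field_simp
      rw [Real.norm_eq_abs, abs_of_nonneg (by positivity)]
      have hsq : (k^μ/(r^μ*(r^α-k^α)) - (1/s)*k^(2-α)/(r^2-k^2))^2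
          ≤ 2*((k^μ/(1-(1/2:ℝ)^α)) * r^(-(μ+α)))^2
            + 2*(((4/3)*((1/s)*k^(2-α))) * r^(-2:ℝ))^2 := by
        nlinarith [sq_abs (k^μ/(r^μ*(r^α-k^α))), sq_abs ((1/s)*k^(2-α)/(r^2-k^2)),
          sq_nonneg (k^μ/(r^μ*(r^α-k^α)) + (1/s)*k^(2-α)/(r^2-k^2)),
          mul_self_le_mul_self (abs_nonneg (k^μ/(r^μ*(r^α-k^α)))) hAbs,
          mul_self_le_mul_self (abs_nonneg ((1/s)*k^(2-α)/(r^2-k^2))) hBbs]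
      calc r * (k^μ/(r^μ*(r^α-k^α)) - (1/s)*k^(2-α)/(r^2-k^2))^2
          ≤ r * (2*((k^μ/(1-(1/2:ℝ)^α)) * r^(-(μ+α)))^2
              + 2*(((4/3)*((1/s)*k^(2-α))) * r^(-2:ℝ))^2) :=
            mul_le_mul_of_nonneg_left hsq hr0.le
        _ = 2*(k^μ/(1-(1/2:ℝ)^α))^2 * (r * (r^(-(μ+α)))^2)
              + 2*((4/3)*((1/s)*k^(2-α)))^2 * (r * (r^(-2:ℝ))^2) := by ring
        _ = 2*(k^μ/(1-(1/2:ℝ)^α))^2 * r^(1+2*(-(μ+α)))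
              + 2*((4/3)*((1/s)*k^(2-α)))^2 * r^(1+2*(-2:ℝ)) := by
            rw [mul_rpow_sq hr0, mul_rpow_sq hr0]
  -- piece 2 : Ioc (k/2) (2*k)
  have h2 : IntegrableOn (fun r : ℝ =>
      r * (k^μ/(r^μ*(r^α-k^α)) - (1/s)*k^(2-α)/(r^2-k^2))^2) (Ioc (k/2) (2*k)) := by
    obtain ⟨M, hM0, hM⟩ := auxMid s k μ α hs0 hk hα0 hμ0 hαs
    have hsub : (Ioc (k/2) (2*k) \ {k} : Set ℝ) =ᵐ[volume] Ioc (k/2) (2*k) :=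
      diff_ae_eq_self.mpr (measure_mono_null inter_subset_right (measure_singleton k))
    refine MeasureTheory.IntegrableOn.congr_set_ae ?_ hsub.symm
    have hms : MeasurableSet (Ioc (k/2) (2*k) \ {k} : Set ℝ) :=
      measurableSet_Ioc.diff (measurableSet_singleton k)
    apply Integrable.mono' (g := fun _ => 2*k*M^2)
    · exact integrableOn_const
        ((measure_mono diff_subset).trans_lt measure_Ioc_lt_top).ne
    · refine (auxCont s k μ α (fun x hx => ?_)).aestronglyMeasurable hms
      obtain ⟨hx1, hx2⟩ := hx
      have hxk : x ≠ k := by simpa using hx2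
      have hx0 : (0:ℝ) < x := lt_trans (by positivity) hx1.1
      refine ⟨hx0, ?_, ?_⟩
      · rcases lt_or_gt_of_ne hxk with h | h
        · exact (sub_neg.mpr (Real.rpow_lt_rpow hx0.le h hα0)).ne
        · exact (sub_pos.mpr (Real.rpow_lt_rpow hk.le h hα0)).ne'
      · have : x^2 - k^2 = (x-k)*(x+k) := by ring
        rw [this]
        exact mul_ne_zero (sub_ne_zero.mpr hxk) (by positivity)
    · rw [ae_restrict_iff' hms]
      filter_upwards with x hx
      obtain ⟨hx1, hx2⟩ := hx
      have hxk : x ≠ k := by simpa using hx2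
      have hx0 : (0:ℝ) < x := lt_trans (by positivity) hx1.1
      have hb := hM x ⟨hx1.1.le, hx1.2⟩ hxk
      rw [Real.norm_eq_abs, abs_of_nonneg (by positivity)]
      have hsq : (k^μ/(x^μ*(x^α-k^α)) - (1/s)*k^(2-α)/(x^2-k^2))^2 ≤ M^2 := by
        obtain ⟨hl, hu⟩ := abs_le.mp hb
        exact sq_le_sq' hl hu
      calc x * (k^μ/(x^μ*(x^α-k^α)) - (1/s)*k^(2-α)/(x^2-k^2))^2
          ≤ (2*k) * M^2 :=
            mul_le_mul hx1.2 hsq (sq_nonneg _) (by positivity)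
        _ = 2*k*M^2 := by ring
  have hunion : Ioc (0:ℝ) (k/2) ∪ (Ioc (k/2) (2*k) ∪ Ioi (2*k)) = Ioi 0 := by
    rw [Ioc_union_Ioi_eq_Ioi (by linarith : k/2 ≤ 2*k),
      Ioc_union_Ioi_eq_Ioi (by linarith : (0:ℝ) ≤ k/2)]
  rw [← hunion]
  exact h1.union (h2.union h3)
end aux4


theorem stmt7 (s k : ℝ) (hs0 : 0 < s) (hs1 : s < 1) (hk : 0 < k)
    (hnotnat : ∀ j : ℕ, (1/(2*s) : ℝ) ≠ j) :
    IntegrableOn (fun r : ℝ =>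
      r * (k ^ (2*s*((⌊1/(2*s)⌋₊ : ℕ) : ℝ))
            / (r ^ (2*s*((⌊1/(2*s)⌋₊ : ℕ) : ℝ)) * (r ^ (2*s) - k ^ (2*s)))
          - (1/s) * k ^ (2 - 2*s) / (r^2 - k^2)) ^ 2) (Ioi 0) := by
  set m : ℕ := ⌊1/(2*s)⌋₊ with hm
  have h2s : (0:ℝ) < 2*s := by linarith
  have hfl : ((m:ℝ)) < 1/(2*s) :=
    lt_of_le_of_ne (Nat.floor_le (by positivity)) (Ne.symm (hnotnat m))
  have hfl2 : 1/(2*s) < (m:ℝ) + 1 := Nat.lt_floor_add_one _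
  have hμ1 : 2*s*(m:ℝ) < 1 := by
    have := (lt_div_iff₀ h2s).mp hfl
    nlinarith
  have hsum1 : 1 < 2*s*(m:ℝ) + 2*s := by
    have := (div_lt_iff₀ h2s).mp hfl2
    nlinarith
  exact auxMain s k (2*s*(m:ℝ)) (2*s) hs0 hk h2s (by positivity) hμ1 hsum1 rfl
end

section
/- Let k > 0. If the function u(x) = p(x) sin(kx) + q(x) cos(kx), with p, q real polynomials, satisfies ∫_ℝ (1+x²)^{−δ} |u(x)|² dx < ∞ for some δ < 1, then p and q are constant polynomials. -/
open Polynomial Filter MeasureTheory Real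
lemma ptwise (A B a b s co : ℝ) (h : s^2 + co^2 = 1) :
    (1/2)*(A^2+B^2) - ((a-A)^2 + (b-B)^2) ≤ (A*s+B*co)^2 + (a*co - b*s)^2 := by
  nlinarith [sq_nonneg (A*co - B*s + 2*((a-A)*co - (b-B)*s)), sq_nonneg ((a-A)*s + (b-B)*co),
    sq_nonneg (A*s+B*co), sq_nonneg (A*co - B*s)]

lemma weight_comp (δ c x : ℝ) :
    (1+x^2) ^ (-δ) ≤ (2+2*c^2) ^ |δ| * (1+(x+c)^2) ^ (-δ) := by
  set A : ℝ := 1+x^2 with hAdef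
  set B : ℝ := 1+(x+c)^2 with hBdef
  set κ : ℝ := 2+2*c^2 with hκdef
  have hA : (0:ℝ) < A := by positivity
  have hB : (0:ℝ) < B := by positivity
  have hκ : (1:ℝ) ≤ κ := by nlinarith [sq_nonneg c]
  have hκ0 : (0:ℝ) < κ := by linarith
  have hAB : A ≤ κ * B := by simp only [hAdef, hBdef, hκdef]; nlinarith [sq_nonneg (x+2*c), sq_nonneg c, sq_nonneg (c*(x+c)), sq_nonneg x]
  have hBA : B ≤ κ * A := by simp only [hAdef, hBdef, hκdef]; nlinarith [sq_nonneg (x+2*c), sq_nonneg c, sq_nonneg (c*x), sq_nonneg (x-c)]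
  rcases le_or_gt 0 δ with hδ | hδ
  · -- |δ| = δ, use B ≤ κ A with nonpositive exponent
    have h1 : (κ*A) ^ (-δ) ≤ B ^ (-δ) :=
      Real.rpow_le_rpow_of_nonpos hB hBA (neg_nonpos.mpr hδ)
    rw [Real.mul_rpow hκ0.le hA.le] at h1
    have h2 : κ ^ δ * (κ ^ (-δ) * A ^ (-δ)) ≤ κ ^ δ * B ^ (-δ) :=
      mul_le_mul_of_nonneg_left h1 (Real.rpow_nonneg hκ0.le _)
    rw [← mul_assoc, ← Real.rpow_add hκ0, add_neg_cancel, Real.rpow_zero, one_mul] at h2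
    rwa [abs_of_nonneg hδ]
  · have h1 : A ^ (-δ) ≤ (κ*B) ^ (-δ) :=
      Real.rpow_le_rpow hA.le hAB (by linarith)
    rw [Real.mul_rpow hκ0.le hB.le] at h1
    rwa [abs_of_neg hδ]

lemma comp_sub_natDegree (p : Polynomial ℝ) (c : ℝ) (d : ℕ) (h1 : 1 ≤ d)
    (h2 : p.natDegree ≤ d) : (p.comp (X + C c) - p).natDegree < d := by
  by_cases hp : p.natDegree = 0
  · obtain ⟨a, rfl⟩ := Polynomial.natDegree_eq_zero.mp hp
    simp only [C_comp, sub_self, natDegree_zero]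
    omega
  · have hp0 : p ≠ 0 := fun h => hp (by simp [h])
    have hnc : (X + C c : Polynomial ℝ).natDegree = 1 := natDegree_X_add_C c
    have hcompnd : (p.comp (X + C c)).natDegree = p.natDegree := by
      rw [natDegree_comp, hnc, mul_one]
    have hcomp0 : p.comp (X + C c) ≠ 0 := fun h => hp (by rw [← hcompnd, h, natDegree_zero])
    have hdeg : (p.comp (X + C c)).degree = p.degree := by
      rw [degree_eq_natDegree hcomp0, degree_eq_natDegree hp0, hcompnd]
    have hlc : (p.comp (X + C c)).leadingCoeff = p.leadingCoeff := by
      rw [leadingCoeff_comp (by rw [hnc]; norm_num)]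
      simp [(monic_X_add_C c).leadingCoeff]
    have hlt := degree_sub_lt hdeg hcomp0 hlc
    rw [hdeg] at hlt
    set e := p.comp (X + C c) - p with he
    by_cases he0 : e = 0
    · rw [he0, natDegree_zero]; omega
    · have hlt2 : (e.natDegree : WithBot ℕ) < (p.natDegree : WithBot ℕ) := by
        rw [← degree_eq_natDegree he0, ← degree_eq_natDegree hp0]; exact hlt
      have : e.natDegree < p.natDegree := by exact_mod_cast hlt2
      omega

lemma W_spec_aux (p q : Polynomial ℝ) (h1 : 1 ≤ p.natDegree) (h2 : q.natDegree ≤ p.natDegree) :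
    (p^2+q^2).degree = (2*p.natDegree : ℕ) ∧ 0 < (p^2+q^2).leadingCoeff := by
  have hp0 : p ≠ 0 := fun h => by simp [h] at h1
  have hlcp : p.leadingCoeff ≠ 0 := leadingCoeff_ne_zero.mpr hp0
  have hp2 : (p^2 : Polynomial ℝ) ≠ 0 := pow_ne_zero _ hp0
  have hdp2 : (p^2).degree = ((2*p.natDegree:ℕ) : WithBot ℕ) := by
    rw [degree_eq_natDegree hp2, natDegree_pow]
  rcases lt_or_eq_of_le h2 with h | h
  · have hq2 : (q^2).degree < (p^2).degree := by
      calc (q^2).degree ≤ ((q^2).natDegree : WithBot ℕ) := degree_le_natDegree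
        _ = ((2*q.natDegree : ℕ) : WithBot ℕ) := by rw [natDegree_pow]
        _ < ((2*p.natDegree : ℕ) : WithBot ℕ) := by
            exact_mod_cast (show 2*q.natDegree < 2*p.natDegree by omega)
        _ = (p^2).degree := hdp2.symm
    constructor
    · rw [degree_add_eq_left_of_degree_lt hq2, hdp2]
    · rw [leadingCoeff_add_of_degree_lt' hq2, leadingCoeff_pow]
      positivity
  · have hq0 : q ≠ 0 := fun hh => by rw [hh] at h; simp at h; omega
    have hlcq : q.leadingCoeff ≠ 0 := leadingCoeff_ne_zero.mpr hq0
    have hco : (p^2+q^2).coeff (2*p.natDegree) =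
        p.leadingCoeff * p.leadingCoeff + q.leadingCoeff * q.leadingCoeff := by
      rw [coeff_add, pow_two, pow_two, two_mul]
      rw [show p.natDegree + p.natDegree = q.natDegree + q.natDegree from by omega] at *
      rw [coeff_mul_degree_add_degree q q]
      congr 1
      rw [show q.natDegree + q.natDegree = p.natDegree + p.natDegree from by omega]
      exact coeff_mul_degree_add_degree p p
    have hpos : 0 < (p^2+q^2).coeff (2*p.natDegree) := by
      rw [hco]
      exact add_pos_of_pos_of_nonneg (mul_self_pos.mpr hlcp) (mul_self_nonneg _)
    have hne : (p^2+q^2).coeff (2*p.natDegree) ≠ 0 := ne_of_gt hpos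
    have hW0 : (p^2+q^2) ≠ 0 := fun hh => by simp [hh] at hne
    have hndle : (p^2+q^2).natDegree ≤ 2*p.natDegree := by
      refine le_trans (natDegree_add_le _ _) ?_
      rw [natDegree_pow, natDegree_pow, h]
      omega
    have hndge : 2*p.natDegree ≤ (p^2+q^2).natDegree := le_natDegree_of_ne_zero hne
    have hnd : (p^2+q^2).natDegree = 2*p.natDegree := le_antisymm hndle hndge
    constructor
    · rw [degree_eq_natDegree hW0, hnd]
    · rw [leadingCoeff, hnd]; exact hpos

lemma W_spec (p q : Polynomial ℝ) (hd : 1 ≤ max p.natDegree q.natDegree) :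
    (p^2+q^2).degree = (2*max p.natDegree q.natDegree : ℕ) ∧ 0 < (p^2+q^2).leadingCoeff := by
  rcases le_total q.natDegree p.natDegree with h | h
  · rw [max_eq_left h] at *; exact W_spec_aux p q hd h
  · rw [max_eq_right h] at *; rw [add_comm]; exact W_spec_aux q p hd h

theorem stmt10 (k δ : ℝ) (hk : 0 < k) (hδ : δ < 1) (p q : Polynomial ℝ)
    (hint : MeasureTheory.Integrable (fun x : ℝ =>
      (1 + x^2) ^ (-δ) * (p.eval x * Real.sin (k*x) + q.eval x * Real.cos (k*x))^2)) :
    p.degree ≤ 0 ∧ q.degree ≤ 0 := by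
  by_contra hcon
  rw [not_and_or] at hcon
  have hd : 1 ≤ max p.natDegree q.natDegree := by
    rcases hcon with h | h
    · have h2 := natDegree_pos_iff_degree_pos.mpr (not_le.mp h)
      omega
    · have h2 := natDegree_pos_iff_degree_pos.mpr (not_le.mp h)
      omega
  set d := max p.natDegree q.natDegree with hddef
  set c := Real.pi / (2*k) with hcdef
  set W := p^2 + q^2 with hWdef
  obtain ⟨hWdeg, hWlc⟩ := W_spec p q hd
  set L := W.leadingCoeff with hLdef
  set e := p.comp (X + C c) - p with hedef
  set f := q.comp (X + C c) - q with hfdef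
  have hend : e.natDegree < d := comp_sub_natDegree p c d hd (le_max_left _ _)
  have hfnd : f.natDegree < d := comp_sub_natDegree q c d hd (le_max_right _ _)
  set D := e^2 + f^2 with hDdef
  have hDdeg : D.degree < (X^(2*d) : Polynomial ℝ).degree := by
    rw [degree_X_pow]
    calc D.degree ≤ (D.natDegree : WithBot ℕ) := degree_le_natDegree
      _ < ((2*d : ℕ) : WithBot ℕ) := by
          have hle : D.natDegree ≤ max (e^2).natDegree (f^2).natDegree := natDegree_add_le _ _
          rw [natDegree_pow, natDegree_pow] at hle
          exact_mod_cast (show D.natDegree < 2*d by omega)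
  have hT1 : Tendsto (fun x => eval x W / x^(2*d)) atTop (nhds L) := by
    have h := Polynomial.div_tendsto_leadingCoeff_div_of_degree_eq W (X^(2*d))
      (by rw [hWdeg, degree_X_pow])
    simpa using h
  have hT2 : Tendsto (fun x => eval x D / x^(2*d)) atTop (nhds 0) := by
    have h := Polynomial.div_tendsto_zero_of_degree_lt D (X^(2*d)) hDdeg
    simpa using h
  have hT : Tendsto (fun x => (1/2) * (eval x W / x^(2*d)) - eval x D / x^(2*d))
      atTop (nhds ((1/2)*L - 0)) := (hT1.const_mul _).sub hT2
  have hev : ∀ᶠ x in atTop,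
      L/4 ≤ (1/2) * (eval x W / x^(2*d)) - eval x D / x^(2*d) :=
    hT.eventually (eventually_ge_nhds (by linarith))
  obtain ⟨M, hM⟩ := eventually_atTop.mp (hev.and (eventually_ge_atTop (1:ℝ)))
  -- pointwise polynomial bound for x ≥ M
  have hpoly : ∀ x ≥ M, L/8 * (1+x^2) ≤ (1/2) * eval x W - eval x D := by
    intro x hx
    obtain ⟨h1, hx1⟩ := hM x hx
    have hxpos : (0:ℝ) < x := by linarith
    have hxp : (0:ℝ) < x^(2*d) := pow_pos hxpos _
    have h2 := mul_le_mul_of_nonneg_right h1 hxp.le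
    rw [sub_mul, mul_assoc, div_mul_cancel₀ _ hxp.ne', div_mul_cancel₀ _ hxp.ne'] at h2
    have h3 : 1 + x^2 ≤ 2 * x^(2*d) := by
      have hx2 : x^2 ≤ x^(2*d) := pow_le_pow_right₀ hx1 (by omega)
      nlinarith [hx2]
    nlinarith
  -- the function u
  set u : ℝ → ℝ := fun x => p.eval x * Real.sin (k*x) + q.eval x * Real.cos (k*x) with hudef
  have hkc : ∀ x : ℝ, k*(x+c) = k*x + Real.pi/2 := by
    intro x
    rw [hcdef]
    field_simp
  have huc : ∀ x, u (x+c) =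
      eval (x+c) p * Real.cos (k*x) - eval (x+c) q * Real.sin (k*x) := by
    intro x
    simp only [hudef]
    rw [hkc, Real.sin_add_pi_div_two, Real.cos_add_pi_div_two]
    ring
  have hkey : ∀ x, (1/2) * eval x W - eval x D ≤ (u x)^2 + (u (x+c))^2 := by
    intro x
    have h := ptwise (eval x p) (eval x q) (eval (x+c) p) (eval (x+c) q)
      (Real.sin (k*x)) (Real.cos (k*x)) (Real.sin_sq_add_cos_sq _)
    have hWe : eval x W = (eval x p)^2 + (eval x q)^2 := by simp [hWdef]
    have hDe : eval x D = (eval (x+c) p - eval x p)^2 + (eval (x+c) q - eval x q)^2 := by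
      simp [hDdef, hedef, hfdef, eval_comp]
    rw [hWe, hDe, huc x]
    simpa [hudef] using h
  -- integrability
  set κ : ℝ := (2+2*c^2) ^ |δ| with hκdef
  have hκ0 : 0 ≤ κ := Real.rpow_nonneg (by positivity) _
  have hgc : Integrable (fun x : ℝ => (1+(x+c)^2) ^ (-δ) * (u (x+c))^2) := by
    have h := hint.comp_add_right c
    simpa [hudef] using h
  have hG : Integrable (fun x : ℝ =>
      (1+x^2) ^ (-δ) * (u x)^2 + κ * ((1+(x+c)^2) ^ (-δ) * (u (x+c))^2)) :=
    hint.add (hgc.const_mul κ)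
  -- lower bound for G on Ici M
  have hGE : ∀ x ∈ Set.Ici M, L/8 ≤ (1+x^2) ^ (-δ) * (u x)^2 + κ * ((1+(x+c)^2) ^ (-δ) * (u (x+c))^2) := by
    intro x hx
    have hxM : M ≤ x := hx
    have hw : (0:ℝ) < (1+x^2) ^ (-δ) := Real.rpow_pos_of_pos (by positivity) _
    have step1 : L/8 * (1+x^2) ≤ (u x)^2 + (u (x+c))^2 :=
      le_trans (hpoly x hxM) (hkey x)
    have step2 : (1+x^2) ^ (-δ) * (L/8 * (1+x^2)) ≤
        (1+x^2) ^ (-δ) * ((u x)^2 + (u (x+c))^2) :=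
      mul_le_mul_of_nonneg_left step1 hw.le
    have step3 : (1+x^2) ^ (-δ) * (u (x+c))^2 ≤ κ * ((1+(x+c)^2) ^ (-δ) * (u (x+c))^2) := by
      have := mul_le_mul_of_nonneg_right (weight_comp δ c x) (sq_nonneg (u (x+c)))
      calc (1+x^2) ^ (-δ) * (u (x+c))^2 ≤
          (2+2*c^2) ^ |δ| * (1+(x+c)^2) ^ (-δ) * (u (x+c))^2 := this
        _ = κ * ((1+(x+c)^2) ^ (-δ) * (u (x+c))^2) := by rw [hκdef]; ring
    have step4 : L/8 ≤ (1+x^2) ^ (-δ) * (L/8 * (1+x^2)) := by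
      have h1 : (1:ℝ) ≤ (1+x^2) ^ (1-δ) := by
        apply Real.one_le_rpow (by nlinarith [sq_nonneg x]) (by linarith)
      have h2 : (1+x^2) ^ (-δ) * (1+x^2) = (1+x^2) ^ (1-δ) := by
        nth_rewrite 2 [← Real.rpow_one (1+x^2)]
        rw [← Real.rpow_add (by positivity)]
        ring_nf
      calc L/8 = L/8 * 1 := by ring
        _ ≤ L/8 * ((1+x^2) ^ (1-δ)) := by
            apply mul_le_mul_of_nonneg_left h1 (by linarith)
        _ = (1+x^2) ^ (-δ) * (L/8 * (1+x^2)) := by rw [← h2]; ring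
    calc L/8 ≤ (1+x^2) ^ (-δ) * (L/8 * (1+x^2)) := step4
      _ ≤ (1+x^2) ^ (-δ) * ((u x)^2 + (u (x+c))^2) := step2
      _ = (1+x^2) ^ (-δ) * (u x)^2 + (1+x^2) ^ (-δ) * (u (x+c))^2 := by ring
      _ ≤ (1+x^2) ^ (-δ) * (u x)^2 + κ * ((1+(x+c)^2) ^ (-δ) * (u (x+c))^2) := by linarith
  -- contradiction: constant L/8 would be integrable on Ici M
  have hconst : Integrable (fun _ : ℝ => L/8) (volume.restrict (Set.Ici M)) := by
    apply Integrable.mono' (hG.restrict (s := Set.Ici M)) aestronglyMeasurable_const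
    rw [ae_restrict_iff' measurableSet_Ici]
    filter_upwards with x hx
    rw [Real.norm_eq_abs, abs_of_pos (by linarith : (0:ℝ) < L/8)]
    exact hGE x hx
  rw [integrable_const_iff] at hconst
  rcases hconst with h | h
  · exact absurd h (by positivity)
  · rw [isFiniteMeasure_restrict, Real.volume_Ici] at h
    exact absurd h (by simp)
end

section
/- Let 1/2 < δ < 1 and let f : ℝ^n → ℂ satisfy |f(x)| ≤ |x|^{−α} (1+|x|²)^{−β/2} with 2α + 2β > n − 2δ and 2α < n. Then for every g ∈ L²(ℝ^n) supported in a fixed compact set D, the convolution f * g satisfies ‖f * g‖_{L^{2,−δ}(ℝ^n)} ≤ C(D, δ, α, β) ‖g‖_{L²(ℝ^n)}. -/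
/-!
By Cauchy–Schwarz on `D`, `|(f * g)(x)|² ≤ ‖g‖₂² ∫_D |f(x - y)|² dy`. Integrating against
`⟨x⟩^{-2δ}`, Tonelli and the substitution `x = z + y` together with Peetre's inequality
`⟨z + y⟩^{-2δ} ≤ (2⟨y⟩²)^{|δ|} ⟨z⟩^{-2δ}` bound the constant by
`(2(1 + R²))^{|δ|} |D| ∫ ⟨z⟩^{-2δ} |f(z)|² dz`, where `D ⊆ B_R(0)`. This integral is finite
near the origin because `2α < n` and at infinity because `2α + 2β + 2δ > n`.
-/

open MeasureTheory Set Metric Module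
open scoped NNReal ENNReal

lemma Real.rpow_le_rpow_abs_mul_rpow_of_le_mul {u v K t : ℝ} (hu : 0 < u) (hv : 0 < v)
    (huv : u ≤ K * v) (hvu : v ≤ K * u) : u ^ t ≤ K ^ |t| * v ^ t := by
  have hK : 0 < K := pos_of_mul_pos_left (hu.trans_le huv) hv.le
  rcases le_or_gt 0 t with ht | ht
  · calc u ^ t ≤ (K * v) ^ t := Real.rpow_le_rpow hu.le huv ht
      _ = K ^ |t| * v ^ t := by rw [abs_of_nonneg ht, Real.mul_rpow hK.le hv.le]
  · rw [abs_of_neg ht, Real.rpow_neg hK.le, le_inv_mul_iff₀ (Real.rpow_pos_of_pos hK _),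
      ← Real.mul_rpow hK.le hu.le]
    exact Real.rpow_le_rpow_of_nonpos hv hvu ht.le

section Peetre

variable {E : Type*} [SeminormedAddCommGroup E]

lemma one_add_norm_add_sq_le (x y : E) :
    1 + ‖x + y‖ ^ 2 ≤ 2 * (1 + ‖y‖ ^ 2) * (1 + ‖x‖ ^ 2) := by
  have := norm_add_le x y
  nlinarith [norm_nonneg x, norm_nonneg y, norm_nonneg (x + y), sq_nonneg (‖x‖ - ‖y‖),
    mul_nonneg (sq_nonneg ‖x‖) (sq_nonneg ‖y‖)]

lemma one_add_norm_add_sq_rpow_le (x y : E) (t : ℝ) :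
    (1 + ‖x + y‖ ^ 2) ^ t ≤ (2 * (1 + ‖y‖ ^ 2)) ^ |t| * (1 + ‖x‖ ^ 2) ^ t := by
  refine Real.rpow_le_rpow_abs_mul_rpow_of_le_mul (by positivity) (by positivity)
    (one_add_norm_add_sq_le x y) ?_
  simpa using one_add_norm_add_sq_le (x + y) (-y)

lemma one_add_norm_add_sq_rpow_le_of_norm_le {x y : E} {R : ℝ} (hy : ‖y‖ ≤ R) (t : ℝ) :
    (1 + ‖x + y‖ ^ 2) ^ t ≤ (2 * (1 + R ^ 2)) ^ |t| * (1 + ‖x‖ ^ 2) ^ t := by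
  refine (one_add_norm_add_sq_rpow_le x y t).trans ?_
  gcongr

end Peetre

lemma ENNReal.lintegral_mul_sq_le {α : Type*} [MeasurableSpace α] (μ : Measure α)
    {u v : α → ℝ≥0∞} (hu : AEMeasurable u μ) (hv : AEMeasurable v μ) :
    (∫⁻ a, u a * v a ∂μ) ^ 2 ≤ (∫⁻ a, u a ^ 2 ∂μ) * ∫⁻ a, v a ^ 2 ∂μ := by
  have h := ENNReal.lintegral_mul_le_Lp_mul_Lq μ Real.HolderConjugate.two_two hu hv
  simp only [Pi.mul_apply, ENNReal.rpow_two] at h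
  calc (∫⁻ a, u a * v a ∂μ) ^ 2
      ≤ ((∫⁻ a, u a ^ 2 ∂μ) ^ (1 / 2 : ℝ) * (∫⁻ a, v a ^ 2 ∂μ) ^ (1 / 2 : ℝ)) ^ 2 :=
        pow_le_pow_left' h 2
    _ = (∫⁻ a, u a ^ 2 ∂μ) * ∫⁻ a, v a ^ 2 ∂μ := by
        rw [mul_pow, ← ENNReal.rpow_mul_natCast, ← ENNReal.rpow_mul_natCast]
        norm_num

section Haar

variable {E : Type*} [NormedAddCommGroup E] [NormedSpace ℝ E] [FiniteDimensional ℝ E]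
  [MeasurableSpace E] [BorelSpace E] {μ : Measure E} [μ.IsAddHaarMeasure]

lemma integrableOn_ball_norm_rpow_neg {a : ℝ} (ha : a < finrank ℝ E) (r : ℝ) :
    IntegrableOn (fun x : E => ‖x‖ ^ (-a)) (ball 0 r) μ := by
  rcases le_or_gt a 0 with ha0 | ha0
  · have hcont : Continuous fun x : E => ‖x‖ ^ (-a) :=
      continuous_norm.rpow_const fun _ => Or.inr (neg_nonneg.2 ha0)
    exact (hcont.locallyIntegrable.integrableOn_isCompact (isCompact_closedBall 0 r)).mono_set
      ball_subset_closedBall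
  · refine integrableOn_ball_of_norm_le_rpow (C := 1) ?_ ha ?_
      (measurable_norm.pow_const _).aestronglyMeasurable
    · exact_mod_cast (ha0.trans ha)
    · filter_upwards with x
      rw [Real.norm_of_nonneg (by positivity), one_mul]

lemma integrable_norm_rpow_neg_mul_one_add_norm_sq_rpow_neg {a s : ℝ} (ha : a < finrank ℝ E)
    (has : finrank ℝ E < a + 2 * s) :
    Integrable (fun x : E => ‖x‖ ^ (-a) * (1 + ‖x‖ ^ 2) ^ (-s)) μ := by
  have hcont : Continuous fun x : E => (1 + ‖x‖ ^ 2) ^ (-s) :=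
    (continuous_const.add (continuous_norm.pow 2)).rpow_const fun x =>
      Or.inl (by positivity : (1 : ℝ) + ‖x‖ ^ 2 ≠ 0)
  rw [← integrableOn_univ, ← union_compl_self (ball (0 : E) 1)]
  refine IntegrableOn.union ?_ ?_
  · exact (integrableOn_ball_norm_rpow_neg ha 1).mul_continuousOn_of_subset hcont.continuousOn
      measurableSet_ball (isCompact_closedBall 0 1) ball_subset_closedBall
  · -- away from the origin `‖x‖ ^ 2` and `1 + ‖x‖ ^ 2` agree up to a factor `2`
    refine ((integrable_rpow_neg_one_add_norm_sq (μ := μ) has).const_mul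
      (2 ^ |-a / 2|)).integrableOn.mono' ?_ ?_
    · exact ((measurable_norm.pow_const _).mul hcont.measurable).aestronglyMeasurable
    · refine ae_restrict_of_forall_mem measurableSet_ball.compl fun x hx => ?_
      have hx : 1 ≤ ‖x‖ := by simpa using hx
      have hsq : ‖x‖ ^ (-a) = (‖x‖ ^ 2) ^ (-a / 2) := by
        rw [← Real.rpow_natCast, ← Real.rpow_mul (norm_nonneg x)]; ring_nf
      have hcmp := Real.rpow_le_rpow_abs_mul_rpow_of_le_mul (K := 2) (t := -a / 2)
        (by positivity : 0 < ‖x‖ ^ 2) (by positivity : 0 < 1 + ‖x‖ ^ 2)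
        (by nlinarith) (by nlinarith)
      rw [Real.norm_of_nonneg (by positivity), hsq]
      calc (‖x‖ ^ 2) ^ (-a / 2) * (1 + ‖x‖ ^ 2) ^ (-s)
          ≤ 2 ^ |-a / 2| * (1 + ‖x‖ ^ 2) ^ (-a / 2) * (1 + ‖x‖ ^ 2) ^ (-s) := by gcongr
        _ = 2 ^ |-a / 2| * (1 + ‖x‖ ^ 2) ^ (-(a + 2 * s) / 2) := by
          rw [mul_assoc, ← Real.rpow_add (by positivity)]; ring_nf

lemma lintegral_one_add_norm_sq_rpow_mul_enorm_sq_lt_top {F : Type*} [NormedAddCommGroup F]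
    {f : E → F} {α β δ : ℝ} (hfb : ∀ x, ‖f x‖ ≤ ‖x‖ ^ (-α) * (1 + ‖x‖ ^ 2) ^ (-β / 2))
    (h1 : (finrank ℝ E : ℝ) - 2 * δ < 2 * α + 2 * β) (h2 : 2 * α < finrank ℝ E) :
    ∫⁻ x, ENNReal.ofReal ((1 + ‖x‖ ^ 2) ^ (-δ)) * ‖f x‖ₑ ^ 2 ∂μ < ∞ := by
  refine lt_of_le_of_lt (lintegral_mono fun x => ?_)
    (integrable_norm_rpow_neg_mul_one_add_norm_sq_rpow_neg (μ := μ) (a := 2 * α) (s := β + δ)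
      h2 (by linarith)).lintegral_lt_top
  rw [← ofReal_norm, ← ENNReal.ofReal_pow (norm_nonneg _), ← ENNReal.ofReal_mul (by positivity)]
  refine ENNReal.ofReal_le_ofReal ?_
  calc (1 + ‖x‖ ^ 2) ^ (-δ) * ‖f x‖ ^ 2
      ≤ (1 + ‖x‖ ^ 2) ^ (-δ) * (‖x‖ ^ (-α) * (1 + ‖x‖ ^ 2) ^ (-β / 2)) ^ 2 := by
        gcongr; exact hfb x
    _ = ‖x‖ ^ (-(2 * α)) * (1 + ‖x‖ ^ 2) ^ (-(β + δ)) := by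
        rw [mul_pow, ← Real.rpow_mul_natCast (norm_nonneg x),
          ← Real.rpow_mul_natCast (by positivity), mul_left_comm,
          ← Real.rpow_add (by positivity)]
        ring_nf

end Haar

lemma lintegral_mul_setLIntegral_sub_le {G : Type*} [AddGroup G] [MeasurableSpace G]
    [MeasurableAdd₂ G] [MeasurableNeg G] {μ : Measure G} [SFinite μ] [μ.IsAddRightInvariant]
    {w F : G → ℝ≥0∞} (hw : Measurable w) (hF : Measurable F) {D : Set G} {c : ℝ≥0∞}
    (hwc : ∀ y ∈ D, ∀ z, w (z + y) ≤ c * w z) :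
    ∫⁻ x, w x * ∫⁻ y in D, F (x - y) ∂μ ∂μ ≤ c * μ D * ∫⁻ z, w z * F z ∂μ := by
  have htranslate : ∀ y ∈ D, ∫⁻ x, w x * F (x - y) ∂μ ≤ c * ∫⁻ z, w z * F z ∂μ := by
    intro y hy
    calc ∫⁻ x, w x * F (x - y) ∂μ = ∫⁻ z, w (z + y) * F z ∂μ := by
          rw [← lintegral_add_right_eq_self _ y]; simp only [add_sub_cancel_right]
      _ ≤ ∫⁻ z, c * (w z * F z) ∂μ :=
          lintegral_mono fun z => by rw [← mul_assoc]; gcongr; exact hwc y hy z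
      _ = c * ∫⁻ z, w z * F z ∂μ := lintegral_const_mul _ (hw.mul hF)
  calc ∫⁻ x, w x * ∫⁻ y in D, F (x - y) ∂μ ∂μ
      = ∫⁻ y in D, ∫⁻ x, w x * F (x - y) ∂μ ∂μ := by
        have hmeas (x : G) : Measurable fun y => F (x - y) :=
          hF.comp (measurable_const.sub measurable_id)
        rw [lintegral_congr fun x => (lintegral_const_mul (w x) (hmeas x)).symm]
        exact lintegral_lintegral_swap
          ((hw.comp measurable_fst).mul
            (hF.comp (measurable_fst.sub measurable_snd))).aemeasurable
    _ ≤ ∫⁻ _ in D, c * ∫⁻ z, w z * F z ∂μ ∂μ := setLIntegral_mono measurable_const htranslate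
    _ = c * μ D * ∫⁻ z, w z * F z ∂μ := by rw [setLIntegral_const]; ring

lemma enorm_integral_mul_sq_le_of_forall_compl_eq_zero {α 𝕜 : Type*} [MeasurableSpace α]
    [NormedRing 𝕜] [NormMulClass 𝕜] [NormedSpace ℝ 𝕜] {μ : Measure α} {D : Set α}
    {u v : α → 𝕜} (hu : AEStronglyMeasurable u (μ.restrict D))
    (hv : AEStronglyMeasurable v μ) (hvD : ∀ a ∉ D, v a = 0) :
    ‖∫ a, u a * v a ∂μ‖ₑ ^ 2 ≤ (∫⁻ a in D, ‖u a‖ₑ ^ 2 ∂μ) * ∫⁻ a, ‖v a‖ₑ ^ 2 ∂μ := by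
  rw [← setIntegral_eq_integral_of_forall_compl_eq_zero fun a ha => by simp [hvD a ha]]
  calc ‖∫ a in D, u a * v a ∂μ‖ₑ ^ 2 ≤ (∫⁻ a in D, ‖u a‖ₑ * ‖v a‖ₑ ∂μ) ^ 2 := by
        gcongr
        exact (enorm_integral_le_lintegral_enorm _).trans_eq (by simp only [enorm_mul])
    _ ≤ (∫⁻ a in D, ‖u a‖ₑ ^ 2 ∂μ) * ∫⁻ a in D, ‖v a‖ₑ ^ 2 ∂μ :=
        ENNReal.lintegral_mul_sq_le _ hu.enorm hv.restrict.enorm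
    _ ≤ (∫⁻ a in D, ‖u a‖ₑ ^ 2 ∂μ) * ∫⁻ a, ‖v a‖ₑ ^ 2 ∂μ := by
        gcongr; exact Measure.restrict_le_self

lemma lintegral_mul_enorm_integral_mul_sq_le {G 𝕜 : Type*} [AddGroup G] [MeasurableSpace G]
    [MeasurableAdd₂ G] [MeasurableNeg G] {μ : Measure G} [SFinite μ] [μ.IsAddRightInvariant]
    [RCLike 𝕜] {w : G → ℝ≥0∞} (hw : Measurable w) {f g : G → 𝕜} (hf : Measurable f)
    (hg : Measurable g) {D : Set G} (hgD : ∀ y ∉ D, g y = 0) {c : ℝ≥0∞}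
    (hwc : ∀ y ∈ D, ∀ z, w (z + y) ≤ c * w z) :
    ∫⁻ x, w x * ‖∫ y, f (x - y) * g y ∂μ‖ₑ ^ 2 ∂μ
      ≤ c * μ D * (∫⁻ z, w z * ‖f z‖ₑ ^ 2 ∂μ) * ∫⁻ y, ‖g y‖ₑ ^ 2 ∂μ := by
  have hkernel : Measurable fun p : G × G => ‖f (p.1 - p.2)‖ₑ ^ 2 :=
    (hf.comp (measurable_fst.sub measurable_snd)).enorm.pow_const 2
  calc ∫⁻ x, w x * ‖∫ y, f (x - y) * g y ∂μ‖ₑ ^ 2 ∂μ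
      ≤ ∫⁻ x, w x * ((∫⁻ y in D, ‖f (x - y)‖ₑ ^ 2 ∂μ) * ∫⁻ y, ‖g y‖ₑ ^ 2 ∂μ) ∂μ := by
        gcongr with x
        exact enorm_integral_mul_sq_le_of_forall_compl_eq_zero
          (hf.comp (measurable_const.sub measurable_id)).aestronglyMeasurable
          hg.aestronglyMeasurable hgD
    _ = (∫⁻ x, w x * ∫⁻ y in D, ‖f (x - y)‖ₑ ^ 2 ∂μ ∂μ) * ∫⁻ y, ‖g y‖ₑ ^ 2 ∂μ := by
        simp_rw [← mul_assoc]
        exact lintegral_mul_const _ (hw.mul (hkernel.lintegral_prod_right' (ν := μ.restrict D)))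
    _ ≤ c * μ D * (∫⁻ z, w z * ‖f z‖ₑ ^ 2 ∂μ) * ∫⁻ y, ‖g y‖ₑ ^ 2 ∂μ := by
        gcongr
        exact lintegral_mul_setLIntegral_sub_le hw (hf.enorm.pow_const 2) hwc

theorem stmt11_general (n : ℕ) (δ α β : ℝ)
    (h1 : (n : ℝ) - 2*δ < 2*α + 2*β) (h2 : 2*α < (n : ℝ))
    (D : Set (EuclideanSpace ℝ (Fin n))) (hD : IsCompact D)
    (f : EuclideanSpace ℝ (Fin n) → ℂ) (hf : Measurable f)
    (hfb : ∀ x, ‖f x‖ ≤ ‖x‖ ^ (-α) * (1 + ‖x‖^2) ^ (-β/2)) :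
    ∃ C : ℝ≥0, ∀ g : EuclideanSpace ℝ (Fin n) → ℂ, Measurable g →
      (∀ x, x ∉ D → g x = 0) →
      ∫⁻ x, ENNReal.ofReal ((1 + ‖x‖^2) ^ (-δ) * ‖∫ y, f (x - y) * g y‖^2)
        ≤ (C : ENNReal) * ∫⁻ x, ENNReal.ofReal (‖g x‖^2) := by
  obtain ⟨R, hDR⟩ := hD.isBounded.subset_closedBall 0
  set w : EuclideanSpace ℝ (Fin n) → ℝ≥0∞ := fun x => ENNReal.ofReal ((1 + ‖x‖ ^ 2) ^ (-δ))
  set c : ℝ≥0∞ := ENNReal.ofReal ((2 * (1 + R ^ 2)) ^ |-δ|)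
  have hwc : ∀ y ∈ D, ∀ z, w (z + y) ≤ c * w z := fun y hy z => by
    rw [← ENNReal.ofReal_mul (by positivity)]
    exact ENNReal.ofReal_le_ofReal
      (one_add_norm_add_sq_rpow_le_of_norm_le (by simpa using hDR hy) (-δ))
  have hwf : ∫⁻ z, w z * ‖f z‖ₑ ^ 2 < ∞ :=
    lintegral_one_add_norm_sq_rpow_mul_enorm_sq_lt_top hfb (by simpa using h1) (by simpa using h2)
  refine ⟨(c * volume D * ∫⁻ z, w z * ‖f z‖ₑ ^ 2).toNNReal, fun g hg hgD => ?_⟩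
  rw [ENNReal.coe_toNNReal (ENNReal.mul_ne_top (ENNReal.mul_ne_top ENNReal.ofReal_ne_top
    hD.measure_lt_top.ne) hwf.ne)]
  have henorm_sq (z : ℂ) : ENNReal.ofReal (‖z‖ ^ 2) = ‖z‖ₑ ^ 2 := by
    rw [ENNReal.ofReal_pow (norm_nonneg _), ofReal_norm]
  have hweight (x : EuclideanSpace ℝ (Fin n)) (z : ℂ) :
      ENNReal.ofReal ((1 + ‖x‖ ^ 2) ^ (-δ) * ‖z‖ ^ 2) = w x * ‖z‖ₑ ^ 2 := by
    rw [ENNReal.ofReal_mul (by positivity), henorm_sq]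
  simp only [hweight, henorm_sq]
  exact lintegral_mul_enorm_integral_mul_sq_le (by fun_prop) hf hg hgD hwc

theorem stmt11 (n : ℕ) (δ α β : ℝ) (hδ1 : 1/2 < δ) (hδ2 : δ < 1)
    (h1 : (n : ℝ) - 2*δ < 2*α + 2*β) (h2 : 2*α < (n : ℝ))
    (D : Set (EuclideanSpace ℝ (Fin n))) (hD : IsCompact D)
    (f : EuclideanSpace ℝ (Fin n) → ℂ) (hf : Measurable f)
    (hfb : ∀ x, ‖f x‖ ≤ ‖x‖ ^ (-α) * (1 + ‖x‖^2) ^ (-β/2)) :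
    ∃ C : ℝ≥0, ∀ g : EuclideanSpace ℝ (Fin n) → ℂ, Measurable g →
      (∀ x, x ∉ D → g x = 0) →
      ∫⁻ x, ENNReal.ofReal ((1 + ‖x‖^2) ^ (-δ) * ‖∫ y, f (x - y) * g y‖^2)
        ≤ (C : ENNReal) * ∫⁻ x, ENNReal.ofReal (‖g x‖^2) :=
  stmt11_general n δ α β h1 h2 D hD f hf hfb
end

section
/- Let 0 < s < 1, k > 0. Then the 1D remainder kernel J(x) := (1/(π|x|^{1−2s})) ∫₀^∞ Im[ e^{−y} / (y^{2s} e^{iπs} − k^{2s}|x|^{2s}) ] dy satisfies |J(x)| ≤ C(s,k) |x|^{−1−2s} for all x ≠ 0, where C(s,k) = (sin(sπ)/(π k^{4s}(1−cos(sπ)²))) Γ(2s+1). -/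
/-!
The imaginary part of `c / (r e^{iθ} - a)` is `-c r sin θ / |r e^{iθ} - a|²`, and `|r e^{iθ} - a|` is at
least the distance `|a sin θ|` from `a` to the line `ℝ e^{iθ}`. Hence the integrand is dominated by
`e^{-y} y^{2s} / (a² sin(πs))` with `a = k^{2s}|x|^{2s}`, whose integral is `Γ(2s+1) / (a² sin(πs))`;
the prefactor `1/(π|x|^{1-2s})` turns this into the bound with `|x|^{-1-2s}`.
-/

open Real MeasureTheory

namespace Complex

theorem im_ofReal_div_ofReal_mul_exp_sub (c r θ a : ℝ) :
    ((c : ℂ) / (r * exp (θ * I) - a)).im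
      = -(c * r * Real.sin θ) / normSq (r * exp (θ * I) - a) := by
  simp only [div_im, sub_re, sub_im, mul_re, mul_im, ofReal_re, ofReal_im,
    exp_ofReal_mul_I_re, exp_ofReal_mul_I_im]
  ring

theorem sq_mul_sin_sq_le_normSq_ofReal_mul_exp_sub (r θ a : ℝ) :
    a ^ 2 * Real.sin θ ^ 2 ≤ normSq (r * exp (θ * I) - a) := by
  have hpyth : normSq (r * exp (θ * I) - a) = (r - a * Real.cos θ) ^ 2 + a ^ 2 * Real.sin θ ^ 2 := by
    rw [normSq_apply]
    simp only [sub_re, sub_im, mul_re, mul_im, ofReal_re, ofReal_im,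
      exp_ofReal_mul_I_re, exp_ofReal_mul_I_im]
    linear_combination (r ^ 2 - a ^ 2) * Real.sin_sq_add_cos_sq θ
  rw [hpyth]
  exact le_add_of_nonneg_left (sq_nonneg _)

theorem abs_im_ofReal_div_ofReal_mul_exp_sub_le (c r θ a : ℝ) (ha : a ≠ 0)
    (hθ : Real.sin θ ≠ 0) :
    |((c : ℂ) / (r * exp (θ * I) - a)).im| ≤ |c * r| / (a ^ 2 * |Real.sin θ|) := by
  have hlow := sq_mul_sin_sq_le_normSq_ofReal_mul_exp_sub r θ a
  have hpos : 0 < a ^ 2 * Real.sin θ ^ 2 := by positivity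
  rw [im_ofReal_div_ofReal_mul_exp_sub, abs_div, abs_neg, abs_mul,
    abs_of_pos (hpos.trans_le hlow)]
  calc |c * r| * |Real.sin θ| / normSq (r * exp (θ * I) - a)
      ≤ |c * r| * |Real.sin θ| / (a ^ 2 * Real.sin θ ^ 2) := by gcongr
    _ = |c * r| / (a ^ 2 * |Real.sin θ|) := by
      rw [← sq_abs (Real.sin θ)]
      field_simp

end Complex

theorem abs_setIntegral_Ioi_im_exp_neg_div_rpow_mul_exp_sub_le {p : ℝ} (hp : -1 < p)
    (θ a : ℝ) (ha : a ≠ 0) (hθ : Real.sin θ ≠ 0) :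
    |∫ y in Set.Ioi (0 : ℝ),
        (Complex.exp (-(y : ℂ)) / (((y ^ p : ℝ) : ℂ) * Complex.exp ((θ : ℂ) * Complex.I)
          - (a : ℂ))).im|
      ≤ Gamma (p + 1) / (a ^ 2 * |Real.sin θ|) := by
  have hGamma : IntegrableOn (fun y : ℝ => Real.exp (-y) * y ^ p) (Set.Ioi 0) := by
    simpa using Real.GammaIntegral_convergent (by linarith : 0 < p + 1)
  have hbound : ∀ y ∈ Set.Ioi (0 : ℝ),
      ‖(Complex.exp (-(y : ℂ)) / (((y ^ p : ℝ) : ℂ) * Complex.exp ((θ : ℂ) * Complex.I)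
          - (a : ℂ))).im‖ ≤ (a ^ 2 * |Real.sin θ|)⁻¹ * (Real.exp (-y) * y ^ p) := by
    intro y hy
    rw [Real.norm_eq_abs, ← Complex.ofReal_neg, ← Complex.ofReal_exp]
    refine (Complex.abs_im_ofReal_div_ofReal_mul_exp_sub_le _ _ θ a ha hθ).trans_eq ?_
    rw [abs_of_nonneg (mul_nonneg (exp_pos _).le (rpow_nonneg (le_of_lt hy) _))]
    ring
  calc _ ≤ ∫ y in Set.Ioi (0 : ℝ), (a ^ 2 * |Real.sin θ|)⁻¹ * (Real.exp (-y) * y ^ p) :=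
        norm_integral_le_of_norm_le (hGamma.const_mul _)
          ((ae_restrict_mem measurableSet_Ioi).mono hbound)
    _ = Gamma (p + 1) / (a ^ 2 * |Real.sin θ|) := by
      rw [integral_const_mul, Gamma_eq_integral (by linarith), add_sub_cancel_right,
        inv_mul_eq_div]

theorem stmt12 (s k x : ℝ) (hs0 : 0 < s) (hs1 : s < 1) (hk : 0 < k) (hx : x ≠ 0) :
    |(1 / (π * |x| ^ (1 - 2*s))) *
        ∫ y in Set.Ioi (0:ℝ),
          (Complex.exp (-(y:ℂ)) /
            (((y ^ (2*s) : ℝ) : ℂ) * Complex.exp (((π * s : ℝ) : ℂ) * Complex.I)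
              - ((k ^ (2*s) * |x| ^ (2*s) : ℝ) : ℂ))).im|
      ≤ (Real.sin (s*π) / (π * k^(4*s) * (1 - Real.cos (s*π)^2))) * Real.Gamma (2*s+1)
          * |x| ^ (-(1 + 2*s)) := by
  have hx' : 0 < |x| := abs_pos.mpr hx
  have hsin : 0 < Real.sin (s * π) :=
    Real.sin_pos_of_pos_of_lt_pi (by positivity) (by nlinarith [Real.pi_pos])
  have hprefactor : 0 < 1 / (π * |x| ^ (1 - 2*s)) := by positivity
  have hbound := abs_setIntegral_Ioi_im_exp_neg_div_rpow_mul_exp_sub_le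
    (by linarith : -1 < 2 * s) (π * s) (k ^ (2*s) * |x| ^ (2*s)) (by positivity)
    (by rw [mul_comm]; exact hsin.ne')
  rw [abs_mul, abs_of_pos hprefactor]
  refine (mul_le_mul_of_nonneg_left hbound hprefactor.le).trans_eq ?_
  have hk_pow : k ^ (4*s) = (k ^ (2*s)) ^ 2 := by
    rw [← Real.rpow_natCast, ← Real.rpow_mul hk.le]; ring_nf
  have hx_pow : |x| ^ (-(1 + 2*s)) = (|x| ^ (1 - 2*s) * (|x| ^ (2*s)) ^ 2)⁻¹ := by
    rw [← Real.rpow_natCast, ← Real.rpow_mul hx'.le, ← Real.rpow_add hx', ← Real.rpow_neg hx'.le]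
    ring_nf
  rw [hk_pow, hx_pow, mul_comm π s, abs_of_pos hsin, ← Real.sin_sq, mul_pow]
  field_simp
end
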